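/- Uniqueness of the bilinear form: if B is a ℤ-bilinear form on the free ℤ-module on words over {x,y} such that (1) words with different (length, x-count) are B-orthogonal, (2) B(a_{x,i} w0, w1) = B(w0, a*_{x,i} w1) for 0 ≤ i ≤ n_x(w0) and B(w0, a_{y,i} w1) = B(a*_{y,i} w0, w1) for 0 ≤ i ≤ n_y(w1) (with B(0,·)=B(·,0)=0 when a terminal annihilation gives 0), and (3) B(1,1) = 1 on the empty word, then B(w0, w1) = 1 if w0 ≤ w1 and 0 otherwise. -/
import Mathlib


open scoped Classical

/-- Words over the two-letter alphabet {x,y}; `false` is `x`, `true` is `y`. -/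
abbrev Word := List Bool

/-- 0-indexed positions of the x's (`false`) in a word. -/
def xIdx (w : Word) : List ℕ :=
  (List.range w.length).filter (fun j => w.getD j true = false)

/-- 0-indexed positions of the y's (`true`) in a word. -/
def yIdx (w : Word) : List ℕ :=
  (List.range w.length).filter (fun j => w.getD j false = true)

/-- `fX w i` = number of y's strictly left of the i-th x of `w` (i is 0-indexed). -/
def fX (w : Word) (i : ℕ) : ℕ := (xIdx w).getD i 0 - i

/-- `fY w j` = number of x's strictly left of the j-th y of `w` (j is 0-indexed). -/
def fY (w : Word) (j : ℕ) : ℕ := (yIdx w).getD j 0 - j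

/-- `hX w i` = (1-indexed) position of the i-th x of `w` (i is 0-indexed). -/
def hX (w : Word) (i : ℕ) : ℕ := (xIdx w).getD i 0 + 1

/-- The pawn-move partial order: same letter counts, and each x of `w0` lies at a
position at most that of the corresponding x of `w1`. -/
def wle (w0 w1 : Word) : Prop :=
  w0.count false = w1.count false ∧ w0.count true = w1.count true ∧
  ∀ i < w0.count false, (xIdx w0).getD i 0 ≤ (xIdx w1).getD i 0

/-- Creation operator `a*_{s,i}` on words: `i = 0` prepends `s`; `1 ≤ i ≤ n_s`
replaces the i-th `s` by `ss`; `i = n_s + 1` appends `s`. -/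
def create (s : Bool) : ℕ → Word → Word
  | 0, w => s :: w
  | _+1, [] => [s]
  | i+1, a :: w =>
    if a = s then (if i = 0 then s :: s :: w else a :: create s i w)
    else a :: create s (i+1) w

/-- Delete the i-th occurrence (1-indexed) of `s`. -/
def delNth (s : Bool) : ℕ → Word → Word
  | _, [] => []
  | i, a :: w => if a = s then (if i ≤ 1 then w else a :: delNth s (i-1) w)
                 else a :: delNth s i w

/-- Annihilation operator `a_{s,i}` on words: `i = 0` deletes an initial `s` (else 0);
`1 ≤ i ≤ n_s` deletes the i-th `s`; `i = n_s + 1` deletes a final `s` (else 0). -/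
def annih (s : Bool) (i : ℕ) (w : Word) : Option Word :=
  if i = 0 then
    match w with
    | a :: t => if a = s then some t else none
    | [] => none
  else if i ≤ w.count s then some (delNth s i w)
  else if i = w.count s + 1 then
    if w.getLast? = some s then some w.dropLast else none
  else none

/-- The free ℤ-module on words: the Fock space `F`. -/
abbrev FS := Word →₀ ℤ

/-- Basis vector of a word. -/
noncomputable def δ (w : Word) : FS := Finsupp.single w 1

/-- `0` for `none`, basis vector for `some`. -/
noncomputable def optδ (o : Option Word) : FS := o.elim 0 δ

/-- Extend a word-indexed family of vectors to a linear map on `FS`. -/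
noncomputable def opOf (g : Word → FS) : FS →ₗ[ℤ] FS := Finsupp.lift FS ℤ Word g

/-- Creation operator as a linear map. -/
noncomputable def Cr (s : Bool) (i : ℕ) : FS →ₗ[ℤ] FS := opOf (fun w => δ (create s i w))

/-- Annihilation operator as a linear map. -/
noncomputable def An (s : Bool) (i : ℕ) : FS →ₗ[ℤ] FS := opOf (fun w => optδ (annih s i w))

/-- Boolean bilinear form on words: `1` if `w0 ≤ w1` in the pawn-move order, else `0`. -/
noncomputable def pairW (w0 w1 : Word) : ℤ := if wle w0 w1 then 1 else 0

/-- Bilinear extension of `pairW` to the free module. -/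
noncomputable def pairF (u v : FS) : ℤ :=
  u.sum fun w0 a => v.sum fun w1 b => a * b * pairW w0 w1

/-- Kronecker delta form on words. -/
noncomputable def dotW (w0 w1 : Word) : ℤ := if w0 = w1 then 1 else 0

/-- Bilinear extension of `dotW`: words form an orthonormal basis. -/
noncomputable def dotF (u v : FS) : ℤ :=
  u.sum fun w0 a => v.sum fun w1 b => a * b * dotW w0 w1

/-- All words of a given length. -/
noncomputable def wordsOfLen (n : ℕ) : Finset Word :=
  (Finset.univ : Finset (Fin n → Bool)).image List.ofFn

/-- Swap `xy → yx` at the x's whose (0-indexed) number lies in `T`;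
the counter `k` records how many x's have been passed. -/
def psiX (T : Finset ℕ) : Word → ℕ → Word
  | [], _ => []
  | false :: true :: w, k =>
      if k ∈ T then true :: false :: psiX T w (k+1)
      else false :: psiX T (true :: w) (k+1)
  | false :: w, k => false :: psiX T w (k+1)
  | true :: w, k => true :: psiX T w k
  termination_by w _ => w.length
  decreasing_by all_goals (simp <;> omega)

/-- Swap `yx → xy` at the y's whose (0-indexed) number lies in `T`. -/
def psiY (T : Finset ℕ) : Word → ℕ → Word
  | [], _ => []
  | true :: false :: w, k =>
      if k ∈ T then false :: true :: psiY T w (k+1)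
      else true :: psiY T (false :: w) (k+1)
  | true :: w, k => true :: psiY T w (k+1)
  | false :: w, k => false :: psiY T w k
  termination_by w _ => w.length
  decreasing_by all_goals (simp <;> omega)

/-- `Ex w`: 0-indexed numbers of the x's of `w` immediately followed by a y. -/
noncomputable def Ex (w : Word) : Finset ℕ :=
  (Finset.range (w.count false)).filter
    (fun i => w.getD ((xIdx w).getD i 0 + 1) false = true)

/-- `Ey w`: 0-indexed numbers of the y's of `w` immediately followed by an x. -/
noncomputable def Ey (w : Word) : Finset ℕ :=
  (Finset.range (w.count true)).filter
    (fun i => w.getD ((yIdx w).getD i 0 + 1) true = false)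

section Aux

set_option linter.unnecessarySeqFocus false

/-- count of `s` among the first `p` letters. -/
def cnt (s : Bool) (w : Word) (p : ℕ) : ℕ := (w.take p).count s

@[simp] lemma cnt_nil (s : Bool) (p : ℕ) : cnt s [] p = 0 := by simp [cnt]
@[simp] lemma cnt_zero (s : Bool) (w : Word) : cnt s w 0 = 0 := by simp [cnt]

lemma cnt_cons_succ (s a : Bool) (w : Word) (p : ℕ) :
    cnt s (a :: w) (p+1) = (if a = s then 1 else 0) + cnt s w p := by
  simp [cnt, List.count_cons]
  by_cases h : a = s <;> simp [h] <;> omega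

lemma cnt_append (s : Bool) (σ τ : Word) (p : ℕ) :
    cnt s (σ ++ τ) p = cnt s σ p + cnt s τ (p - σ.length) := by
  simp [cnt, List.take_append, List.count_append]

lemma cnt_le_count (s : Bool) (w : Word) (p : ℕ) : cnt s w p ≤ w.count s :=
  (List.take_sublist p w).count_le s

lemma cnt_of_le (s : Bool) {w : Word} {p : ℕ} (h : w.length ≤ p) : cnt s w p = w.count s := by
  simp [cnt, List.take_of_length_le h]

lemma cnt_mono (s : Bool) (w : Word) {p q : ℕ} (h : p ≤ q) : cnt s w p ≤ cnt s w q := by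
  have h2 : w.take p = (w.take q).take p := by rw [List.take_take, min_eq_left h]
  rw [cnt, h2]
  exact (List.take_sublist _ _).count_le s

lemma cnt_succ_le (s : Bool) (w : Word) (p : ℕ) : cnt s w (p+1) ≤ cnt s w p + 1 := by
  induction w generalizing p with
  | nil => simp
  | cons a w ih =>
    cases p with
    | zero => simp [cnt_cons_succ]; split <;> omega
    | succ p => rw [cnt_cons_succ, cnt_cons_succ]; have := ih p; omega

lemma length_eq_counts (w : Word) : w.length = w.count false + w.count true := by
  induction w with
  | nil => simp
  | cons a w ih => cases a <;> simp <;> omega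

lemma cnt_add_cnt (w : Word) (p : ℕ) :
    cnt false w p + cnt true w p = min p w.length := by
  have h1 := length_eq_counts (w.take p)
  have h2 : (w.take p).length = min p w.length := by simp
  simp only [cnt] at *
  omega

lemma xIdx_cons (a : Bool) (w : Word) :
    xIdx (a :: w) = (if a = false then [0] else []) ++ (xIdx w).map (·+1) := by
  rw [xIdx, xIdx, List.length_cons, List.range_succ_eq_map, List.filter_cons]
  have h1 : (List.map Nat.succ (List.range w.length)).filter
      (fun j => (a :: w).getD j true = false)
      = ((List.range w.length).filter (fun j => w.getD j true = false)).map (·+1) := by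
    rw [List.filter_map]
    simp [Function.comp_def, Nat.succ_eq_add_one]
  rw [h1]
  cases a <;> simp

lemma xIdx_length (w : Word) : (xIdx w).length = w.count false := by
  induction w with
  | nil => simp [xIdx]
  | cons a w ih => rw [xIdx_cons]; cases a <;> simp [ih]

lemma getD_map_add_one (l : List ℕ) (i : ℕ) (h : i < l.length) :
    (l.map (·+1)).getD i 0 = l.getD i 0 + 1 := by
  rw [List.getD_eq_getElem _ _ (by simpa), List.getD_eq_getElem _ _ h]
  simp

/-- Position of the `i`-th x is `< t` iff at least `i+1` x's among the first `t` letters. -/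
lemma idx_lt_iff (w : Word) (i t : ℕ) (hi : i < w.count false) :
    (xIdx w).getD i 0 < t ↔ i + 1 ≤ cnt false w t := by
  induction w generalizing i t with
  | nil => simp at hi
  | cons a w ih =>
    cases t with
    | zero => simp
    | succ t =>
      rw [cnt_cons_succ]
      cases a with
      | false =>
        rw [xIdx_cons]
        cases i with
        | zero => simp
        | succ i =>
          have hi' : i < w.count false := by simp at hi; omega
          have hlen : i < (xIdx w).length := by rw [xIdx_length]; exact hi'
          have hg : ((if (false : Bool) = false then [0] else ([] : List ℕ)) ++
              (xIdx w).map (·+1)).getD (i+1) 0 = (xIdx w).getD i 0 + 1 := by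
            rw [if_pos rfl, List.singleton_append, List.getD_cons_succ]
            exact getD_map_add_one _ _ hlen
          rw [hg, if_pos rfl]
          have h := ih i t hi'
          exact ⟨fun hh => by have := h.mp (by omega); omega,
            fun hh => by have := h.mpr (by omega); omega⟩
      | true =>
        have hi' : i < w.count false := by simpa using hi
        have hlen : i < (xIdx w).length := by rw [xIdx_length]; exact hi'
        rw [xIdx_cons]
        have hg : ((if (true : Bool) = false then [0] else ([] : List ℕ)) ++
            (xIdx w).map (·+1)).getD i 0 = (xIdx w).getD i 0 + 1 := by
          rw [if_neg (by decide), List.nil_append]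
          exact getD_map_add_one _ _ hlen
        rw [hg, if_neg (by decide)]
        have h := ih i t hi'
        exact ⟨fun hh => by have := h.mp (by omega); omega,
          fun hh => by have := h.mpr (by omega); omega⟩

/-- Dominance characterization of the pawn order. -/
lemma wle_iff_dom (w0 w1 : Word) :
    wle w0 w1 ↔ (w0.count false = w1.count false ∧ w0.count true = w1.count true ∧
      ∀ p, cnt false w1 p ≤ cnt false w0 p) := by
  constructor
  · rintro ⟨hm, hk, hd⟩
    refine ⟨hm, hk, fun p => ?_⟩
    by_cases hc : cnt false w1 p = 0
    · omega
    · set c := cnt false w1 p with hcdef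
      have hc1 : 1 ≤ c := by omega
      have hcm : c ≤ w1.count false := cnt_le_count _ _ _
      have hi : c - 1 < w0.count false := by omega
      have hp1 : (xIdx w1).getD (c-1) 0 < p := by
        rw [idx_lt_iff w1 (c-1) p (by omega)]; omega
      have hq : (xIdx w0).getD (c-1) 0 < p := lt_of_le_of_lt (hd (c-1) hi) hp1
      rw [idx_lt_iff w0 (c-1) p hi] at hq
      omega
  · rintro ⟨hm, hk, hd⟩
    refine ⟨hm, hk, fun i hi => ?_⟩
    have hp : (xIdx w1).getD i 0 < (xIdx w1).getD i 0 + 1 := Nat.lt_succ_self _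
    rw [idx_lt_iff w1 i _ (hm ▸ hi)] at hp
    have := hd ((xIdx w1).getD i 0 + 1)
    have hq : (xIdx w0).getD i 0 < (xIdx w1).getD i 0 + 1 := by
      rw [idx_lt_iff w0 i _ hi]; omega
    omega

/-- Flip x-dominance into y-dominance. -/
lemma dom_flip (w0 w1 : Word) (hlen : w0.length = w1.length)
    (hm : w0.count false = w1.count false) :
    (∀ p, cnt false w1 p ≤ cnt false w0 p) ↔ (∀ p, cnt true w0 p ≤ cnt true w1 p) := by
  have h0 := cnt_add_cnt w0
  have h1 := cnt_add_cnt w1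
  constructor <;> intro h p <;> have := h p <;> have := h0 p <;> have := h1 p <;> omega

end Aux

section Aux2

set_option linter.unnecessarySeqFocus false

lemma cnt_cons_self (s : Bool) (τ : Word) (q : ℕ) :
    cnt s (s :: τ) q = if q = 0 then 0 else 1 + cnt s τ (q-1) := by
  cases q with
  | zero => simp
  | succ q => rw [cnt_cons_succ, if_pos rfl, if_neg (by omega)]; simp

lemma cnt_insert (s : Bool) (σ τ : Word) (p : ℕ) :
    cnt s (σ ++ s :: τ) p =
      if p ≤ σ.length then cnt s (σ ++ τ) p else cnt s (σ ++ τ) (p-1) + 1 := by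
  rcases le_or_gt p σ.length with h | h
  · rw [if_pos h, cnt_append, cnt_append, cnt_cons_self,
      if_pos (by omega), Nat.sub_eq_zero_of_le h]
    simp
  · rw [if_neg (by omega), cnt_append, cnt_append, cnt_cons_self, if_neg (by omega)]
    have hσ : cnt s σ p = cnt s σ (p-1) := by
      rw [cnt_of_le s (by omega), cnt_of_le s (by omega)]
    have harg : p - σ.length - 1 = p - 1 - σ.length := by omega
    rw [harg, hσ]
    omega

lemma c1_dom (s : Bool) (α β γ ζ : Word) (c : ℕ) (hα : α.count s = c) (hγ : γ.count s = c) :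
    (∀ p, cnt s (γ ++ s :: s :: ζ) p ≤ cnt s (α ++ s :: β) p) ↔
    (∀ p, cnt s (γ ++ s :: ζ) p ≤ cnt s (α ++ β) p) := by
  set A := α.length with hA
  set G := γ.length with hG
  have hw0 : ∀ p, cnt s (α ++ s :: β) p =
      if p ≤ A then cnt s (α ++ β) p else cnt s (α ++ β) (p-1) + 1 := fun p => cnt_insert s α β p
  have hw1 : ∀ p, cnt s (γ ++ s :: s :: ζ) p =
      if p ≤ G then cnt s (γ ++ s :: ζ) p else cnt s (γ ++ s :: ζ) (p-1) + 1 :=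
    fun p => cnt_insert s γ (s :: ζ) p
  have huG : cnt s (γ ++ s :: ζ) G = c := by
    rw [cnt_append, Nat.sub_self, cnt_of_le s (le_refl _), hγ]; simp
  have hvA : cnt s (α ++ β) A = c := by
    rw [cnt_append, Nat.sub_self, cnt_of_le s (le_refl _), hα]; simp
  constructor
  · intro H
    have hAG : A ≤ G := by
      by_contra hc
      push_neg at hc
      have h1 := H (G+1)
      rw [hw1, if_neg (by omega), hw0, if_pos (by omega)] at h1
      simp only [Nat.add_sub_cancel] at h1
      have h2 : cnt s (α ++ β) (G+1) ≤ c := hvA ▸ cnt_mono s (α ++ β) (by omega)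
      omega
    intro p
    rcases le_or_gt p G with hpG | hpG
    · rcases le_or_gt p A with hpA | hpA
      · have h1 := H p
        rwa [hw1, if_pos hpG, hw0, if_pos hpA] at h1
      · have h2 : cnt s (γ ++ s :: ζ) p ≤ c := huG ▸ cnt_mono s (γ ++ s :: ζ) hpG
        have h3 : c ≤ cnt s (α ++ β) p := hvA ▸ cnt_mono s (α ++ β) (by omega)
        omega
    · have h1 := H (p+1)
      rw [hw1, if_neg (by omega), hw0, if_neg (by omega)] at h1
      simpa using h1
  · intro K
    have hAG : A ≤ G := by
      by_contra hc
      push_neg at hc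
      have h1 := K (G+1)
      have h2 : cnt s (γ ++ s :: ζ) (G+1) = c + 1 := by
        rw [cnt_append, cnt_of_le s (by omega), hγ, show G + 1 - G = 1 by omega,
          cnt_cons_self, if_neg (by omega)]
        simp
      have h3 : cnt s (α ++ β) (G+1) ≤ c := hvA ▸ cnt_mono s (α ++ β) (by omega)
      omega
    intro p
    rw [hw1, hw0]
    rcases le_or_gt p G with hpG | hpG
    · rw [if_pos hpG]
      rcases le_or_gt p A with hpA | hpA
      · rw [if_pos hpA]; exact K p
      · rw [if_neg (by omega)]
        have h1 := K p
        have h2 := cnt_succ_le s (α ++ β) (p-1)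
        rw [show p - 1 + 1 = p by omega] at h2
        omega
    · rw [if_neg (by omega), if_neg (by omega)]
      have h1 := K (p-1)
      omega

lemma c2_dom (s : Bool) (α β u : Word) (hβ : β.count s = 0) (hu : u.count s = α.count s)
    (hlen : α.length ≤ u.length) :
    (∀ p, cnt s (u ++ [s]) p ≤ cnt s (α ++ s :: β) p) ↔
    (∀ p, cnt s u p ≤ cnt s (α ++ β) p) := by
  set A := α.length with hA
  set c := α.count s with hc
  have hcv : ∀ q, cnt s β q = 0 := fun q => by
    have := cnt_le_count s β q; omega
  have hv : ∀ p, cnt s (α ++ β) p = cnt s α p := fun p => by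
    rw [cnt_append, hcv]; omega
  have hw0 : ∀ p, cnt s (α ++ s :: β) p =
      if p ≤ A then cnt s (α ++ β) p else cnt s (α ++ β) (p-1) + 1 := fun p => cnt_insert s α β p
  have hw1 : ∀ p, cnt s (u ++ [s]) p =
      if p ≤ u.length then cnt s u p else cnt s u (p-1) + 1 := fun p => by
    have := cnt_insert s u [] p
    rwa [List.append_nil] at this
  constructor
  · intro H p
    rcases le_or_gt p A with hpA | hpA
    · have h1 := H p
      rwa [hw1, if_pos (by omega), hw0, if_pos hpA] at h1
    · have h1 : cnt s u p ≤ c := hu ▸ cnt_le_count s u p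
      have h2 : c ≤ cnt s (α ++ β) p := by
        rw [hv, cnt_of_le s (by omega)]
      omega
  · intro K p
    rw [hw1, hw0]
    rcases le_or_gt p A with hpA | hpA
    · rw [if_pos (show p ≤ u.length by omega), if_pos hpA]; exact K p
    · rw [if_neg (show ¬ p ≤ A by omega)]
      have h2 : cnt s (α ++ β) (p-1) = c := by rw [hv, cnt_of_le s (by omega)]
      have h3 : cnt s u p ≤ c := hu ▸ cnt_le_count s u p
      have h4 : cnt s u (p-1) ≤ c := hu ▸ cnt_le_count s u (p-1)
      rcases le_or_gt p u.length with h5 | h5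
      · rw [if_pos h5]; omega
      · rw [if_neg (show ¬ p ≤ u.length by omega)]; omega

lemma wle_cons_xx (a b : Word) : wle (false :: a) (false :: b) ↔ wle a b := by
  rw [wle_iff_dom, wle_iff_dom]
  have hca : ∀ w : Word, (false :: w).count false = w.count false + 1 := fun w => by simp
  have hct : ∀ w : Word, (false :: w).count true = w.count true := fun w => by simp
  constructor
  · rintro ⟨hm, hk, hd⟩
    refine ⟨by rw [hca, hca] at hm; omega, by rwa [hct, hct] at hk, fun p => ?_⟩
    have h1 := hd (p+1)
    rw [cnt_cons_succ, cnt_cons_succ, if_pos rfl] at h1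
    omega
  · rintro ⟨hm, hk, hd⟩
    refine ⟨by rw [hca, hca]; omega, by rwa [hct, hct], fun p => ?_⟩
    cases p with
    | zero => simp
    | succ p =>
      rw [cnt_cons_succ, cnt_cons_succ, if_pos rfl]
      have := hd p
      omega

lemma wle_cons_yy (a b : Word) : wle (true :: a) (true :: b) ↔ wle a b := by
  rw [wle_iff_dom, wle_iff_dom]
  have hca : ∀ w : Word, (true :: w).count false = w.count false := fun w => by simp
  have hct : ∀ w : Word, (true :: w).count true = w.count true + 1 := fun w => by simp
  constructor
  · rintro ⟨hm, hk, hd⟩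
    refine ⟨by rwa [hca, hca] at hm, by rw [hct, hct] at hk; omega, fun p => ?_⟩
    have h1 := hd (p+1)
    rw [cnt_cons_succ, cnt_cons_succ, if_neg (by decide)] at h1
    omega
  · rintro ⟨hm, hk, hd⟩
    refine ⟨by rwa [hca, hca], by rw [hct, hct]; omega, fun p => ?_⟩
    cases p with
    | zero => simp
    | succ p =>
      rw [cnt_cons_succ, cnt_cons_succ, if_neg (by decide)]
      have := hd p
      omega

lemma not_wle_yx (a b : Word) : ¬ wle (true :: a) (false :: b) := by
  rw [wle_iff_dom]
  rintro ⟨hm, hk, hd⟩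
  have h1 := hd 1
  rw [show (1 : ℕ) = 0 + 1 from rfl, cnt_cons_succ, cnt_cons_succ,
    if_pos rfl, if_neg (by decide)] at h1
  simp at h1

end Aux2

section Aux3

set_option linter.unnecessarySeqFocus false

@[simp] lemma optδ_some (w : Word) : optδ (some w) = δ w := rfl
@[simp] lemma optδ_none : optδ (none : Option Word) = 0 := rfl

lemma count_cons_bool (s a : Bool) (w : Word) :
    (a :: w).count s = (if a = s then 1 else 0) + w.count s := by
  rw [List.count_cons]
  by_cases h : a = s <;> simp [h] <;> omega

lemma annih_zero_cons (s a : Bool) (w : Word) :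
    annih s 0 (a :: w) = if a = s then some w else none := by
  simp [annih]

lemma annih_mid (s : Bool) (i : ℕ) (w : Word) (hi : 1 ≤ i) (h2 : i ≤ w.count s) :
    annih s i w = some (delNth s i w) := by
  unfold annih
  rw [if_neg (by omega), if_pos h2]

lemma delNth_eq (s : Bool) (i : ℕ) (α β : Word) (hα : α.count s = i - 1) (hi : 1 ≤ i) :
    delNth s i (α ++ s :: β) = α ++ β := by
  induction α generalizing i with
  | nil =>
    have h1 : i = 1 := by simp at hα; omega
    subst h1
    simp [delNth]
  | cons a α ih =>
    rw [count_cons_bool] at hα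
    by_cases h : a = s
    · rw [if_pos h] at hα
      have h2 : ¬ i ≤ 1 := by omega
      rw [List.cons_append, List.cons_append, delNth, if_pos h, if_neg h2,
        ih (i-1) (by omega) (by omega)]
    · rw [if_neg h] at hα
      rw [List.cons_append, List.cons_append, delNth, if_neg h, ih i (by omega) hi]

lemma create_mid (s : Bool) (i : ℕ) (γ ζ : Word) (hγ : γ.count s = i - 1) (hi : 1 ≤ i) :
    create s i (γ ++ s :: ζ) = γ ++ s :: s :: ζ := by
  induction γ generalizing i with
  | nil =>
    have h1 : i = 1 := by simp at hγ; omega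
    subst h1
    simp [create]
  | cons a γ ih =>
    rw [count_cons_bool] at hγ
    obtain ⟨j, rfl⟩ : ∃ j, i = j + 1 := ⟨i - 1, by omega⟩
    by_cases h : a = s
    · rw [if_pos h] at hγ
      rw [List.cons_append, List.cons_append, create, if_pos h, if_neg (by omega),
        ih j (by omega) (by omega)]
    · rw [if_neg h] at hγ
      rw [List.cons_append, List.cons_append, create, if_neg h, ih (j+1) (by omega) hi]

lemma create_last (s : Bool) (i : ℕ) (u : Word) (h : u.count s + 1 ≤ i) (hi : 1 ≤ i) :
    create s i u = u ++ [s] := by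
  induction u generalizing i with
  | nil =>
    obtain ⟨j, rfl⟩ : ∃ j, i = j + 1 := ⟨i - 1, by omega⟩
    simp [create]
  | cons a u ih =>
    rw [count_cons_bool] at h
    obtain ⟨j, rfl⟩ : ∃ j, i = j + 1 := ⟨i - 1, by omega⟩
    by_cases hs : a = s
    · rw [if_pos hs] at h
      rw [create, if_pos hs, if_neg (by omega), ih j (by omega) (by omega), List.cons_append]
    · rw [if_neg hs] at h
      rw [create, if_neg hs, ih (j+1) (by omega) hi, List.cons_append]

lemma decompCount (s : Bool) (i : ℕ) (w : Word) (hi : 1 ≤ i) (h2 : i ≤ w.count s) :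
    ∃ α β, w = α ++ s :: β ∧ α.count s = i - 1 := by
  induction w generalizing i with
  | nil => simp at h2; omega
  | cons a w ih =>
    rw [count_cons_bool] at h2
    by_cases h : a = s
    · rw [if_pos h] at h2
      rcases Nat.eq_or_lt_of_le hi with h1 | h1
      · exact ⟨[], w, by rw [h]; rfl, by simp; omega⟩
      · obtain ⟨α, β, hw, hα⟩ := ih (i-1) (by omega) (by omega)
        exact ⟨a :: α, β, by rw [List.cons_append, hw],
          by rw [count_cons_bool, if_pos h]; omega⟩
    · rw [if_neg h] at h2
      obtain ⟨α, β, hw, hα⟩ := ih i hi (by omega)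
      exact ⟨a :: α, β, by rw [List.cons_append, hw],
        by rw [count_cons_bool, if_neg h]; omega⟩

lemma nopair : ∀ (n : ℕ) (w : Word) (s : Bool), w.length ≤ n →
    (∀ γ ζ, w ≠ γ ++ s :: s :: ζ) → (∀ u, w ≠ u ++ [s]) → w.count s ≤ w.count (!s) := by
  intro n
  induction n with
  | zero =>
    intro w s h _ _
    have : w = [] := by cases w with | nil => rfl | cons a w => simp at h
    subst this; simp
  | succ n ih =>
    intro w s hlen hss hend
    rcases w with _ | ⟨a, w'⟩
    · simp
    · by_cases h : a = s
      · subst h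
        rcases w' with _ | ⟨b, w''⟩
        · exact absurd (by simp) (hend [])
        · by_cases hb : b = a
          · exact absurd (by rw [hb]; rfl) (hss [] w'')
          · have hb' : b = !a := by cases a <;> cases b <;> simp at hb ⊢
            have hss' : ∀ γ ζ, w'' ≠ γ ++ a :: a :: ζ := fun γ ζ hh =>
              hss (a :: b :: γ) ζ (by rw [List.cons_append, List.cons_append, hh])
            have hend' : ∀ u, w'' ≠ u ++ [a] := fun u hh =>
              hend (a :: b :: u) (by rw [List.cons_append, List.cons_append, hh])
            have hlen' : w''.length ≤ n := by simp at hlen; omega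
            have := ih w'' a hlen' hss' hend'
            rw [count_cons_bool, count_cons_bool, count_cons_bool, count_cons_bool,
              if_pos rfl, if_neg hb, if_neg (by cases a <;> decide), if_pos hb']
            omega
      · have h' : a = !s := by cases a <;> cases s <;> simp at h ⊢
        have hss' : ∀ γ ζ, w' ≠ γ ++ s :: s :: ζ := fun γ ζ hh =>
          hss (a :: γ) ζ (by rw [List.cons_append, hh])
        have hend' : ∀ u, w' ≠ u ++ [s] := fun u hh =>
          hend (a :: u) (by rw [List.cons_append, hh])
        have hlen' : w'.length ≤ n := by simp at hlen; omega
        have := ih w' s hlen' hss' hend'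
        rw [count_cons_bool, count_cons_bool, if_neg h, if_pos h']
        omega

end Aux3

section Aux4

set_option linter.unnecessarySeqFocus false

lemma wle_surgery_x1 (α β γ ζ : Word) (c : ℕ)
    (hα : α.count false = c) (hγ : γ.count false = c)
    (hm : (α ++ false :: β).count false = (γ ++ false :: false :: ζ).count false)
    (hk : (α ++ false :: β).count true = (γ ++ false :: false :: ζ).count true) :
    wle (α ++ false :: β) (γ ++ false :: false :: ζ) ↔ wle (α ++ β) (γ ++ false :: ζ) := by
  rw [wle_iff_dom, wle_iff_dom]
  have cm : (α ++ β).count false = (γ ++ false :: ζ).count false := by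
    simp [List.count_append] at hm ⊢; omega
  have ck : (α ++ β).count true = (γ ++ false :: ζ).count true := by
    simp [List.count_append] at hk ⊢; omega
  have hd := c1_dom false α β γ ζ c hα hγ
  constructor
  · rintro ⟨_, _, h⟩; exact ⟨cm, ck, hd.mp h⟩
  · rintro ⟨_, _, h⟩; exact ⟨hm, hk, hd.mpr h⟩

lemma wle_surgery_x2 (α β u : Word)
    (hβ : β.count false = 0) (hu : u.count false = α.count false) (hlen : α.length ≤ u.length)
    (hm : (α ++ false :: β).count false = (u ++ [false]).count false)
    (hk : (α ++ false :: β).count true = (u ++ [false]).count true) :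
    wle (α ++ false :: β) (u ++ [false]) ↔ wle (α ++ β) u := by
  rw [wle_iff_dom, wle_iff_dom]
  have cm : (α ++ β).count false = u.count false := by
    simp [List.count_append] at hm ⊢; omega
  have ck : (α ++ β).count true = u.count true := by
    simp [List.count_append] at hk ⊢; omega
  have hd := c2_dom false α β u hβ hu hlen
  constructor
  · rintro ⟨_, _, h⟩; exact ⟨cm, ck, hd.mp h⟩
  · rintro ⟨_, _, h⟩; exact ⟨hm, hk, hd.mpr h⟩

lemma wle_surgery_y1 (α β γ ζ : Word) (c : ℕ)
    (hα : α.count true = c) (hγ : γ.count true = c)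
    (hlen : (γ ++ true :: true :: ζ).length = (α ++ true :: β).length)
    (hm : (γ ++ true :: true :: ζ).count false = (α ++ true :: β).count false)
    (hk : (γ ++ true :: true :: ζ).count true = (α ++ true :: β).count true) :
    wle (γ ++ true :: true :: ζ) (α ++ true :: β) ↔ wle (γ ++ true :: ζ) (α ++ β) := by
  rw [wle_iff_dom, wle_iff_dom]
  have cm : (γ ++ true :: ζ).count false = (α ++ β).count false := by
    simp [List.count_append] at hm ⊢; omega
  have ck : (γ ++ true :: ζ).count true = (α ++ β).count true := by
    simp [List.count_append] at hk ⊢; omega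
  have hlen' : (γ ++ true :: ζ).length = (α ++ β).length := by
    simp at hlen ⊢; omega
  have f1 := dom_flip (γ ++ true :: true :: ζ) (α ++ true :: β) hlen hm
  have f2 := dom_flip (γ ++ true :: ζ) (α ++ β) hlen' cm
  have hd := c1_dom true α β γ ζ c hα hγ
  constructor
  · rintro ⟨_, _, h⟩; exact ⟨cm, ck, f2.mpr (hd.mp (f1.mp h))⟩
  · rintro ⟨_, _, h⟩; exact ⟨hm, hk, f1.mpr (hd.mpr (f2.mp h))⟩

lemma wle_surgery_y2 (α β u : Word)
    (hβ : β.count true = 0) (hu : u.count true = α.count true) (hlen0 : α.length ≤ u.length)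
    (hlen : (u ++ [true]).length = (α ++ true :: β).length)
    (hm : (u ++ [true]).count false = (α ++ true :: β).count false)
    (hk : (u ++ [true]).count true = (α ++ true :: β).count true) :
    wle (u ++ [true]) (α ++ true :: β) ↔ wle u (α ++ β) := by
  rw [wle_iff_dom, wle_iff_dom]
  have cm : u.count false = (α ++ β).count false := by
    simp [List.count_append] at hm ⊢; omega
  have ck : u.count true = (α ++ β).count true := by
    simp [List.count_append] at hk ⊢; omega
  have hlen' : u.length = (α ++ β).length := by
    simp at hlen ⊢; omega
  have f1 := dom_flip (u ++ [true]) (α ++ true :: β) hlen hm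
  have f2 := dom_flip u (α ++ β) hlen' cm
  have hd := c2_dom true α β u hβ hu hlen0
  constructor
  · rintro ⟨_, _, h⟩; exact ⟨cm, ck, f2.mpr (hd.mp (f1.mp h))⟩
  · rintro ⟨_, _, h⟩; exact ⟨hm, hk, f1.mpr (hd.mpr (f2.mp h))⟩

end Aux4

/-- Uniqueness of the bilinear form. Any ℤ-bilinear `B` on the free
module on words such that (1) words with different length or x-count are orthogonal,
(2) creations/annihilations are partially adjoint, and (3) `B(1,1) = 1` on the empty
word, coincides with the boolean form of the pawn-move order. -/
theorem stmt11 (B : FS →ₗ[ℤ] FS →ₗ[ℤ] ℤ)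
    (h1 : ∀ w0 w1 : Word,
      (w0.length ≠ w1.length ∨ w0.count false ≠ w1.count false) →
      B (δ w0) (δ w1) = 0)
    (h2x : ∀ (w0 w1 : Word) (i : ℕ), i ≤ w0.count false →
      B (optδ (annih false i w0)) (δ w1) = B (δ w0) (δ (create false i w1)))
    (h2y : ∀ (w0 w1 : Word) (i : ℕ), i ≤ w1.count true →
      B (δ w0) (optδ (annih true i w1)) = B (δ (create true i w0)) (δ w1))
    (h3 : B (δ []) (δ []) = 1) :
    ∀ w0 w1 : Word, B (δ w0) (δ w1) = pairW w0 w1 := by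
  have pairW_iff : ∀ {a b c d : Word}, (wle a b ↔ wle c d) → pairW a b = pairW c d := by
    intro a b c d h
    unfold pairW
    by_cases hw : wle a b
    · rw [if_pos hw, if_pos (h.mp hw)]
    · rw [if_neg hw, if_neg (fun hc => hw (h.mpr hc))]
  have pairW_zero : ∀ {a b : Word}, ¬ wle a b → pairW a b = 0 := by
    intro a b h; unfold pairW; rw [if_neg h]
  have key : ∀ n : ℕ, ∀ w0 w1 : Word, w0.length = n → w1.length = n →
      B (δ w0) (δ w1) = pairW w0 w1 := by
    intro n
    induction n with
    | zero =>
      intro w0 w1 e0 e1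
      rw [List.length_eq_zero_iff] at e0 e1
      subst e0; subst e1
      rw [h3]
      unfold pairW
      rw [if_pos ⟨rfl, rfl, fun i hi => by simp at hi⟩]
    | succ n ih =>
      intro w0 w1 e0 e1
      by_cases hm : w0.count false = w1.count false
      case neg =>
        rw [h1 w0 w1 (Or.inr hm), pairW_zero (fun hw => hm hw.1)]
      have hk : w0.count true = w1.count true := by
        have g0 := length_eq_counts w0
        have g1 := length_eq_counts w1
        omega
      rcases w0 with _ | ⟨a, w0'⟩
      · simp at e0
      rcases w1 with _ | ⟨b, w1'⟩
      · simp at e1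
      have e0' : w0'.length = n := by simpa using e0
      have e1' : w1'.length = n := by simpa using e1
      cases b with
      | false =>
        have hcr : (false :: w1' : Word) = create false 0 w1' := by simp [create]
        conv_lhs => rw [hcr]
        rw [← h2x (a :: w0') w1' 0 (Nat.zero_le _), annih_zero_cons]
        cases a with
        | false =>
          rw [if_pos rfl, optδ_some, ih w0' w1' e0' e1']
          exact pairW_iff (wle_cons_xx w0' w1').symm
        | true =>
          rw [if_neg (by decide), optδ_none, map_zero, LinearMap.zero_apply]
          exact (pairW_zero (not_wle_yx w0' w1')).symm
      | true =>
        cases a with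
        | true =>
          have hcr : (true :: w0' : Word) = create true 0 w0' := by simp [create]
          conv_lhs => rw [hcr]
          rw [← h2y w0' (true :: w1') 0 (Nat.zero_le _), annih_zero_cons, if_pos rfl,
            optδ_some, ih w0' w1' e0' e1']
          exact pairW_iff (wle_cons_yy w0' w1').symm
        | false =>
          -- the hard case: w0 = x ⬝ w0', w1 = y ⬝ w1'
          by_cases hxx : ∃ γ ζ : Word, (true :: w1' : Word) = γ ++ false :: false :: ζ
          · obtain ⟨γ, ζ, hw1⟩ := hxx
            have hγm : γ.count false + 2 ≤ (true :: w1' : Word).count false := by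
              rw [hw1]; simp [List.count_append]
            set i := γ.count false + 1 with hidef
            have him : i ≤ (false :: w0' : Word).count false := by rw [hm]; omega
            obtain ⟨α, β, hw0, hαc⟩ := decompCount false i (false :: w0' : Word) (by omega) him
            have hcr : create false i (γ ++ false :: ζ) = (true :: w1' : Word) := by
              rw [hw1]; exact create_mid false i γ ζ (by omega) (by omega)
            have han : annih false i (false :: w0' : Word) = some (α ++ β) := by
              rw [annih_mid false i _ (by omega) him, hw0,
                delNth_eq false i α β hαc (by omega)]
            have hlen2 : (γ ++ false :: ζ : Word).length = n := by
              have := congrArg List.length hw1; simp at this ⊢; omega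
            have hlen0 : (α ++ β : Word).length = n := by
              have := congrArg List.length hw0; simp at this ⊢; omega
            calc B (δ (false :: w0')) (δ (true :: w1'))
                = B (δ (false :: w0')) (δ (create false i (γ ++ false :: ζ))) := by rw [hcr]
              _ = B (optδ (annih false i (false :: w0'))) (δ (γ ++ false :: ζ)) :=
                  (h2x _ _ i him).symm
              _ = B (δ (α ++ β)) (δ (γ ++ false :: ζ)) := by rw [han, optδ_some]
              _ = pairW (α ++ β) (γ ++ false :: ζ) := ih _ _ hlen0 hlen2
              _ = pairW (false :: w0') (true :: w1') := by
                  rw [hw0, hw1]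
                  exact (pairW_iff (wle_surgery_x1 α β γ ζ (i-1) (by omega) (by omega)
                    (by rw [← hw0, ← hw1]; exact hm) (by rw [← hw0, ← hw1]; exact hk))).symm
          by_cases hex : ∃ u : Word, (true :: w1' : Word) = u ++ [false]
          · obtain ⟨u, hw1⟩ := hex
            have hm1 : (true :: w1' : Word).count false = u.count false + 1 := by
              rw [hw1]; simp [List.count_append]
            have hm0 : (false :: w0' : Word).count false = 1 + w0'.count false := by
              rw [count_cons_bool]; norm_num
            set m := (false :: w0' : Word).count false with hmdef
            obtain ⟨α, β, hw0, hαc⟩ := decompCount false m (false :: w0' : Word) (by omega) (by omega)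
            have hβ : β.count false = 0 := by
              have := congrArg (List.count false) hw0
              simp [List.count_append] at this; omega
            have hu : u.count false = α.count false := by omega
            have hcr : create false m u = (true :: w1' : Word) := by
              rw [hw1]; exact create_last false m u (by omega) (by omega)
            have han : annih false m (false :: w0' : Word) = some (α ++ β) := by
              rw [annih_mid false m _ (by omega) (by omega), hw0,
                delNth_eq false m α β hαc (by omega)]
            have hlenu : u.length = n := by
              have := congrArg List.length hw1; simp at this ⊢; omega
            have hlen0 : (α ++ β : Word).length = n := by
              have := congrArg List.length hw0; simp at this ⊢; omega
            have hlenα : α.length ≤ u.length := by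
              have := congrArg List.length hw0; simp at this; omega
            calc B (δ (false :: w0')) (δ (true :: w1'))
                = B (δ (false :: w0')) (δ (create false m u)) := by rw [hcr]
              _ = B (optδ (annih false m (false :: w0'))) (δ u) :=
                  (h2x _ _ m (by omega)).symm
              _ = B (δ (α ++ β)) (δ u) := by rw [han, optδ_some]
              _ = pairW (α ++ β) u := ih _ _ hlen0 hlenu
              _ = pairW (false :: w0') (true :: w1') := by
                  rw [hw0, hw1]
                  exact (pairW_iff (wle_surgery_x2 α β u hβ hu hlenα
                    (by rw [← hw0, ← hw1]; exact hm) (by rw [← hw0, ← hw1]; exact hk))).symm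
          by_cases hyy : ∃ γ ζ : Word, (false :: w0' : Word) = γ ++ true :: true :: ζ
          · obtain ⟨γ, ζ, hw0⟩ := hyy
            have hγk : γ.count true + 2 ≤ (false :: w0' : Word).count true := by
              rw [hw0]; simp [List.count_append]
            set j := γ.count true + 1 with hjdef
            have hjk : j ≤ (true :: w1' : Word).count true := by rw [← hk]; omega
            obtain ⟨α, β, hw1, hαc⟩ := decompCount true j (true :: w1' : Word) (by omega) hjk
            have hcr : create true j (γ ++ true :: ζ) = (false :: w0' : Word) := by
              rw [hw0]; exact create_mid true j γ ζ (by omega) (by omega)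
            have han : annih true j (true :: w1' : Word) = some (α ++ β) := by
              rw [annih_mid true j _ (by omega) hjk, hw1,
                delNth_eq true j α β hαc (by omega)]
            have hlen2 : (γ ++ true :: ζ : Word).length = n := by
              have := congrArg List.length hw0; simp at this ⊢; omega
            have hlen1 : (α ++ β : Word).length = n := by
              have := congrArg List.length hw1; simp at this ⊢; omega
            have hlenf : (γ ++ true :: true :: ζ : Word).length = (α ++ true :: β : Word).length := by
              rw [← hw0, ← hw1, e0, e1]
            calc B (δ (false :: w0')) (δ (true :: w1'))
                = B (δ (create true j (γ ++ true :: ζ))) (δ (true :: w1')) := by rw [hcr]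
              _ = B (δ (γ ++ true :: ζ)) (optδ (annih true j (true :: w1'))) :=
                  (h2y _ _ j hjk).symm
              _ = B (δ (γ ++ true :: ζ)) (δ (α ++ β)) := by rw [han, optδ_some]
              _ = pairW (γ ++ true :: ζ) (α ++ β) := ih _ _ hlen2 hlen1
              _ = pairW (false :: w0') (true :: w1') := by
                  rw [hw0, hw1]
                  exact (pairW_iff (wle_surgery_y1 α β γ ζ (j-1) (by omega) (by omega) hlenf
                    (by rw [← hw0, ← hw1]; exact hm) (by rw [← hw0, ← hw1]; exact hk))).symm
          by_cases hey : ∃ v : Word, (false :: w0' : Word) = v ++ [true]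
          · obtain ⟨v, hw0⟩ := hey
            have hk1 : (false :: w0' : Word).count true = v.count true + 1 := by
              rw [hw0]; simp [List.count_append]
            have hk2 : (true :: w1' : Word).count true = 1 + w1'.count true := by
              rw [count_cons_bool]; norm_num
            set k := (true :: w1' : Word).count true with hkdef
            obtain ⟨α, β, hw1, hαc⟩ := decompCount true k (true :: w1' : Word) (by omega) (by omega)
            have hβ : β.count true = 0 := by
              have := congrArg (List.count true) hw1
              simp [List.count_append] at this; omega
            have hv : v.count true = α.count true := by omega
            have hcr : create true k v = (false :: w0' : Word) := by
              rw [hw0]; exact create_last true k v (by omega) (by omega)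
            have han : annih true k (true :: w1' : Word) = some (α ++ β) := by
              rw [annih_mid true k _ (by omega) (by omega), hw1,
                delNth_eq true k α β hαc (by omega)]
            have hlenv : v.length = n := by
              have := congrArg List.length hw0; simp at this ⊢; omega
            have hlen1 : (α ++ β : Word).length = n := by
              have := congrArg List.length hw1; simp at this ⊢; omega
            have hlenα : α.length ≤ v.length := by
              have := congrArg List.length hw1; simp at this; omega
            have hlenf : (v ++ [true] : Word).length = (α ++ true :: β : Word).length := by
              rw [← hw0, ← hw1, e0, e1]
            calc B (δ (false :: w0')) (δ (true :: w1'))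
                = B (δ (create true k v)) (δ (true :: w1')) := by rw [hcr]
              _ = B (δ v) (optδ (annih true k (true :: w1'))) := (h2y _ _ k (by omega)).symm
              _ = B (δ v) (δ (α ++ β)) := by rw [han, optδ_some]
              _ = pairW v (α ++ β) := ih _ _ hlenv hlen1
              _ = pairW (false :: w0') (true :: w1') := by
                  rw [hw0, hw1]
                  exact (pairW_iff (wle_surgery_y2 α β v hβ hv hlenα hlenf
                    (by rw [← hw0, ← hw1]; exact hm) (by rw [← hw0, ← hw1]; exact hk))).symm
          · exfalso
            push_neg at hxx hex hyy hey
            have hss1 : ∀ γ ζ : Word, w1' ≠ γ ++ false :: false :: ζ := fun γ ζ h =>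
              hxx (true :: γ) ζ (by rw [h]; rfl)
            have hend1 : ∀ u : Word, w1' ≠ u ++ [false] := fun u h =>
              hex (true :: u) (by rw [h]; rfl)
            have hss0 : ∀ γ ζ : Word, w0' ≠ γ ++ true :: true :: ζ := fun γ ζ h =>
              hyy (false :: γ) ζ (by rw [h]; rfl)
            have hend0 : ∀ v : Word, w0' ≠ v ++ [true] := fun v h =>
              hey (false :: v) (by rw [h]; rfl)
            have n1 := nopair w1'.length w1' false le_rfl hss1 hend1
            have n0 := nopair w0'.length w0' true le_rfl hss0 hend0
            rw [show (!false) = true from rfl] at n1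
            rw [show (!true) = false from rfl] at n0
            have c0 : (false :: w0' : Word).count false = 1 + w0'.count false := by
              rw [count_cons_bool]; norm_num
            have c1 : (false :: w0' : Word).count true = 0 + w0'.count true := by
              rw [count_cons_bool]; norm_num
            have c2 : (true :: w1' : Word).count false = 0 + w1'.count false := by
              rw [count_cons_bool]; norm_num
            have c3 : (true :: w1' : Word).count true = 1 + w1'.count true := by
              rw [count_cons_bool]; norm_num
            omega
  intro w0 w1
  by_cases hl : w0.length = w1.length
  · exact key w1.length w0 w1 hl rfl
  · rw [h1 w0 w1 (Or.inl hl)]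
    refine (pairW_zero fun hw => hl ?_).symm
    obtain ⟨hm', hk', -⟩ := hw
    have g0 := length_eq_counts w0
    have g1 := length_eq_counts w1
    omega
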